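/- arXiv:2509.14580 — 4 statements merged into one kernel-verified Lean document; each statement's English description precedes it below -/
import Mathlib

section
/- For all integers n ≥ 1 and real t with 0 < t < π/2, the ratio of consecutive Bessel functions satisfies t/(2(n+1)) ≤ J_{n+1}(t)/J_n(t) ≤ t/(2n+1). -/
/-!
Write `J_n(t) = ∑ (-1)^m a_{n,m}(t)` with `a_{n,m}(t) = (t/2)^(2m+n) / (m! (m+n)!)`. For
`0 ≤ t ≤ 2` the `a_{n,m}(t)` decrease in `m`, so the alternating-series bound
`J_n ≥ a_{n,0} - a_{n,1}` gives `J_n(t) > 0` for `0 < t < 2`. The lower bound is the recurrence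
`t J_n + t J_{n+2} = 2(n+1) J_{n+1}` together with `J_{n+2} > 0`. For the upper bound,
`t a_{n,m} = 2(m+n+1) a_{n+1,m}` turns `t J_n - (2n+1) J_{n+1}` into the alternating series with
terms `(2m+1) a_{n+1,m}`; these decrease once `n ≥ 1`, so that series is nonnegative as well.
-/

/-- Bessel function of the first kind of (nonnegative integer) order `n`. -/
noncomputable def besselJ (n : ℕ) (t : ℝ) : ℝ :=
  ∑' m : ℕ, ((-1 : ℝ) ^ m * (t / 2) ^ (2 * m + n)) /
    ((m.factorial : ℝ) * ((m + n).factorial : ℝ))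

open Finset

theorem Antitone.sub_le_of_hasSum_alternating {E : Type*} [Ring E] [PartialOrder E]
    [IsOrderedRing E] [TopologicalSpace E] [IsTopologicalAddGroup E] [OrderClosedTopology E]
    {f : ℕ → E} {l : E} (hf : Antitone f) (h : HasSum (fun i ↦ (-1) ^ i * f i) l) :
    f 0 - f 1 ≤ l := by
  simpa [sum_range_succ, sub_eq_add_neg] using hf.alternating_series_le_tendsto h.tendsto_sum_nat 1

noncomputable def besselJTerm (n : ℕ) (t : ℝ) (m : ℕ) : ℝ :=
  (t / 2) ^ (2 * m + n) / (m.factorial * (m + n).factorial : ℝ)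

namespace besselJTerm

variable (n : ℕ) {t : ℝ}

theorem nonneg (ht : 0 ≤ t) (m : ℕ) : 0 ≤ besselJTerm n t m := by
  unfold besselJTerm; positivity

theorem pos (ht : 0 < t) (m : ℕ) : 0 < besselJTerm n t m := by
  unfold besselJTerm; positivity

variable (t)

theorem mul_eq (m : ℕ) :
    t * besselJTerm n t m = 2 * (m + n + 1) * besselJTerm (n + 1) t m := by
  simp only [besselJTerm, show 2 * m + (n + 1) = 2 * m + n + 1 by ring,
    show m + (n + 1) = m + n + 1 by ring, pow_succ, Nat.factorial_succ]
  push_cast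
  field_simp

theorem mul_succ_eq (m : ℕ) :
    t * besselJTerm (n + 1) t m = 2 * (m + 1) * besselJTerm n t (m + 1) := by
  simp only [besselJTerm, show 2 * (m + 1) + n = 2 * m + (n + 1) + 1 by ring,
    show m + 1 + n = m + (n + 1) by ring, pow_succ, Nat.factorial_succ]
  push_cast
  field_simp

theorem succ_eq (m : ℕ) :
    ((m + 1) * (m + n + 1)) * besselJTerm n t (m + 1) = (t / 2) ^ 2 * besselJTerm n t m := by
  linear_combination -(t / 4) * mul_eq n t m - ((m + n + 1) / 2) * mul_succ_eq n t m

variable {n t}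

theorem antitone (ht0 : 0 ≤ t) (ht2 : t ≤ 2) : Antitone (besselJTerm n t) := by
  refine antitone_nat_of_succ_le fun m ↦ ?_
  have hsq : (t / 2) ^ 2 ≤ 1 := pow_le_one₀ (by positivity) (by linarith)
  have hm : (1 : ℝ) ≤ (m + 1) * (m + n + 1) := by nlinarith
  nlinarith [succ_eq n t m, nonneg n ht0 m, nonneg n ht0 (m + 1)]

theorem antitone_odd_mul (hn : 2 ≤ n) (ht0 : 0 ≤ t) (ht2 : t ≤ 2) :
    Antitone fun m : ℕ ↦ (2 * m + 1) * besselJTerm n t m := by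
  refine antitone_nat_of_succ_le fun m ↦ ?_
  have hsq : (t / 2) ^ 2 ≤ 1 := pow_le_one₀ (by positivity) (by linarith)
  have hn' : (2 : ℝ) ≤ n := by exact_mod_cast hn
  have h3 : (3 : ℝ) ≤ (m + 1) * (m + n + 1) := by nlinarith [(by positivity : (0 : ℝ) ≤ m)]
  have hm : (2 * m + 3 : ℝ) ≤ (2 * m + 1) * ((m + 1) * (m + n + 1)) := by nlinarith
  have hodd : (0 : ℝ) ≤ (2 * m + 1) * besselJTerm n t m :=
    mul_nonneg (by positivity) (nonneg n ht0 m)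
  push_cast
  nlinarith [succ_eq n t m, mul_le_mul_of_nonneg_right hm (nonneg n ht0 (m + 1)),
    mul_le_mul_of_nonneg_right hsq hodd]

theorem summable_alternating (n : ℕ) (t : ℝ) :
    Summable fun m ↦ (-1) ^ m * besselJTerm n t m := by
  refine .of_norm_bounded ((Real.summable_pow_div_factorial (|t / 2| ^ 2)).mul_left (|t / 2| ^ n))
    fun m ↦ ?_
  have hfac : (1 : ℝ) ≤ (m + n).factorial := by exact_mod_cast (m + n).factorial_pos
  rw [norm_mul, norm_pow, norm_neg, norm_one, one_pow, one_mul, besselJTerm, Real.norm_eq_abs,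
    abs_div, abs_pow, abs_of_pos (by positivity : (0 : ℝ) < m.factorial * (m + n).factorial),
    ← mul_div_assoc, ← pow_mul, ← pow_add, add_comm n]
  gcongr
  exact le_mul_of_one_le_right (by positivity) hfac

end besselJTerm

theorem hasSum_besselJ (n : ℕ) (t : ℝ) :
    HasSum (fun m ↦ (-1) ^ m * besselJTerm n t m) (besselJ n t) := by
  simpa only [besselJ, besselJTerm, mul_div_assoc] using
    (besselJTerm.summable_alternating n t).hasSum

theorem besselJ_pos (n : ℕ) {t : ℝ} (ht0 : 0 < t) (ht2 : t < 2) : 0 < besselJ n t := by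
  have hsq : (t / 2) ^ 2 < 1 := pow_lt_one₀ (by positivity) (by linarith) two_ne_zero
  have hdec : besselJTerm n t 1 < besselJTerm n t 0 := by
    have h := besselJTerm.succ_eq n t 0
    push_cast at h
    nlinarith [besselJTerm.pos n ht0 0, besselJTerm.pos n ht0 1]
  linarith [(besselJTerm.antitone ht0.le ht2.le).sub_le_of_hasSum_alternating (hasSum_besselJ n t)]

theorem besselJ_add_two (n : ℕ) (t : ℝ) :
    t * besselJ n t + t * besselJ (n + 2) t = 2 * (n + 1) * besselJ (n + 1) t := by
  set b := besselJTerm (n + 1) t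
  have h₁ : HasSum (fun m ↦ (-1) ^ m * (2 * (m + n + 1) * b m)) (t * besselJ n t) :=
    ((hasSum_besselJ n t).mul_left t).congr_fun fun m ↦ by rw [← besselJTerm.mul_eq]; ring
  -- the `m = 0` term vanishes, so `t J_{n+2}` is this series shifted by one
  have h₂ : HasSum (fun m ↦ (-1) ^ m * (-(2 * m * b m))) (t * besselJ (n + 2) t) := by
    rw [← hasSum_nat_add_iff' 1]
    simp only [sum_range_one, CharP.cast_eq_zero, mul_zero, zero_mul, neg_zero, sub_zero]
    refine ((hasSum_besselJ (n + 2) t).mul_left t).congr_fun fun m ↦ ?_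
    rw [mul_left_comm, besselJTerm.mul_succ_eq (n + 1)]
    push_cast
    ring
  exact (h₁.add h₂).unique
    (((hasSum_besselJ (n + 1) t).mul_left _).congr_fun fun m ↦ by ring)

theorem mul_besselJ_le (n : ℕ) {t : ℝ} (ht0 : 0 < t) (ht2 : t < 2) :
    t * besselJ n t ≤ 2 * (n + 1) * besselJ (n + 1) t := by
  nlinarith [besselJ_add_two n t, besselJ_pos (n + 2) ht0 ht2]

theorem mul_besselJ_succ_le {n : ℕ} (hn : 1 ≤ n) {t : ℝ} (ht0 : 0 ≤ t) (ht2 : t ≤ 2) :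
    (2 * n + 1) * besselJ (n + 1) t ≤ t * besselJ n t := by
  have hsum : HasSum (fun m ↦ (-1) ^ m * ((2 * m + 1) * besselJTerm (n + 1) t m))
      (t * besselJ n t - (2 * n + 1) * besselJ (n + 1) t) := by
    refine (((hasSum_besselJ n t).mul_left t).sub
      ((hasSum_besselJ (n + 1) t).mul_left (2 * n + 1 : ℝ))).congr_fun fun m ↦ ?_
    rw [mul_left_comm t, besselJTerm.mul_eq]
    ring
  have hanti := besselJTerm.antitone_odd_mul (by omega : 2 ≤ n + 1) ht0 ht2
  linarith [hanti.sub_le_of_hasSum_alternating hsum, hanti zero_le_one]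

/-- For `n ≥ 1` and `0 < t < π/2`,
`t/(2(n+1)) ≤ J_{n+1}(t)/J_n(t) ≤ t/(2n+1)`. -/
theorem besselJ_ratio_bounds (n : ℕ) (hn : 1 ≤ n) (t : ℝ)
    (ht0 : 0 < t) (ht : t < Real.pi / 2) :
    t / (2 * (n + 1)) ≤ besselJ (n + 1) t / besselJ n t ∧
      besselJ (n + 1) t / besselJ n t ≤ t / (2 * n + 1) := by
  have ht2 : t < 2 := by linarith [Real.pi_lt_four]
  have hJ := besselJ_pos n ht0 ht2
  constructor
  · rw [div_le_div_iff₀ (by positivity) hJ]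
    linarith [mul_besselJ_le n ht0 ht2]
  · rw [div_le_div_iff₀ hJ (by positivity)]
    linarith [mul_besselJ_succ_le hn ht0.le ht2.le]
end

section
/- For integers n > m ≥ 0 and real t with 0 < t ≤ π/2, one has J_n(t)/J_m(t) ≤ (t/2)^{n−m} Γ(m+1/2)/Γ(n+1/2). -/
/-!
Write `x = (t/2)^2`, so that `J_k(t) = (t/2)^k S_k(x)` with `S_k(x) = ∑ (-x)^j / (j! (j+k)!)`.
Grouping each series into consecutive pairs of terms, for `x ≤ 2/3` every pair of
`(k + 1/2) S_{k+1}` is dominated by the corresponding pair of `S_k`, and all pairs are positive.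
Since `Γ(k + 3/2) = (k + 1/2) Γ(k + 1/2)`, the sequence `Γ(k + 1/2) S_k(x)` is positive and
decreasing in `k`, which is the claimed bound because `(π/4)^2 < 2/3`.
-/

namespace BesselJ

noncomputable def besselTerm (x : ℝ) (k j : ℕ) : ℝ := x ^ j / (j.factorial * (j + k).factorial)

noncomputable def besselSeries (x : ℝ) (k : ℕ) : ℝ := ∑' j : ℕ, (-1 : ℝ) ^ j * besselTerm x k j

variable {x : ℝ}

lemma besselTerm_nonneg (hx : 0 ≤ x) (k j : ℕ) : 0 ≤ besselTerm x k j := by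
  unfold besselTerm; positivity

lemma besselTerm_pos (hx : 0 < x) (k j : ℕ) : 0 < besselTerm x k j := by
  unfold besselTerm; positivity

lemma summable_besselTerm (hx : 0 ≤ x) (k : ℕ) : Summable (besselTerm x k) := by
  refine (Real.summable_pow_div_factorial x).of_nonneg_of_le (besselTerm_nonneg hx k) fun j ↦ ?_
  refine div_le_div_of_nonneg_left (by positivity) (by positivity) ?_
  have : (1 : ℝ) ≤ (j + k).factorial := mod_cast (j + k).factorial_pos
  nlinarith [(j.factorial_pos.le : 0 ≤ j.factorial)]

lemma besselTerm_succ (x : ℝ) (k j : ℕ) :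
    besselTerm x k (j + 1) = besselTerm x k j * (x / ((j + 1) * (j + k + 1))) := by
  rw [besselTerm, besselTerm, Nat.factorial_succ, show j + 1 + k = j + k + 1 by omega,
    Nat.factorial_succ]
  push_cast
  field_simp
  ring

lemma besselTerm_order_succ (x : ℝ) (k j : ℕ) :
    besselTerm x (k + 1) j = besselTerm x k j / (j + k + 1) := by
  rw [besselTerm, besselTerm, ← add_assoc, Nat.factorial_succ]
  push_cast
  field_simp

lemma besselTerm_sub_succ_pos (hx₀ : 0 < x) (hx₁ : x < 1) (k j : ℕ) :
    0 < besselTerm x k j - besselTerm x k (j + 1) := by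
  have hratio : x / ((j + 1) * (j + k + 1)) < 1 := by
    rw [div_lt_one (by positivity)]
    nlinarith [(j.cast_nonneg : (0 : ℝ) ≤ j), (k.cast_nonneg : (0 : ℝ) ≤ k)]
  rw [besselTerm_succ, sub_pos]
  exact mul_lt_of_lt_one_right (besselTerm_pos hx₀ k j) hratio

/-- The bound `2/3` is where this is tight for `j = k = 0`. -/
lemma add_half_mul_besselTerm_sub_succ_le (hx₀ : 0 ≤ x) (hx : x ≤ 2 / 3) (k j : ℕ) :
    (k + 1 / 2) * (besselTerm x (k + 1) j - besselTerm x (k + 1) (j + 1)) ≤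
      besselTerm x k j - besselTerm x k (j + 1) := by
  have hJ : (0 : ℝ) ≤ j := j.cast_nonneg
  have hK : (0 : ℝ) ≤ k := k.cast_nonneg
  have hgap : 0 ≤ (j + 1) * (j + 1 / 2) * (j + k + 2) - (j + 3 / 2) * x := by
    nlinarith [mul_nonneg hJ hJ, mul_nonneg hJ hK, mul_nonneg (mul_nonneg hJ hJ) hJ,
      mul_nonneg (mul_nonneg hJ hJ) hK]
  have hcoeff : (k + 1 / 2) * ((1 - x / ((j + 1) * (j + k + 2))) / (j + k + 1)) ≤
      1 - x / ((j + 1) * (j + k + 1)) := by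
    rw [← sub_nonneg]
    have : 1 - x / ((j + 1) * (j + k + 1)) -
        (k + 1 / 2) * ((1 - x / ((j + 1) * (j + k + 2))) / (j + k + 1)) =
        ((j + 1) * (j + 1 / 2) * (j + k + 2) - (j + 3 / 2) * x) /
          ((j + 1) * (j + k + 1) * (j + k + 2)) := by
      field_simp
      ring
    rw [this]
    positivity
  have hcast : ((k + 1 : ℕ) : ℝ) = k + 1 := by push_cast; rfl
  calc (k + 1 / 2) * (besselTerm x (k + 1) j - besselTerm x (k + 1) (j + 1))
      = besselTerm x k j * ((k + 1 / 2) * ((1 - x / ((j + 1) * (j + k + 2))) / (j + k + 1))) := by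
        rw [besselTerm_succ, besselTerm_order_succ, hcast]
        ring
    _ ≤ besselTerm x k j * (1 - x / ((j + 1) * (j + k + 1))) :=
        mul_le_mul_of_nonneg_left hcoeff (besselTerm_nonneg hx₀ k j)
    _ = besselTerm x k j - besselTerm x k (j + 1) := by
        rw [besselTerm_succ]
        ring

lemma summable_besselTerm_pairs (hx : 0 ≤ x) (k : ℕ) :
    Summable fun i ↦ besselTerm x k (2 * i) - besselTerm x k (2 * i + 1) :=
  ((summable_besselTerm hx k).comp_injective fun _ _ h ↦ by omega).sub
    ((summable_besselTerm hx k).comp_injective fun _ _ h ↦ by omega)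

lemma besselSeries_eq_tsum_pairs (hx : 0 ≤ x) (k : ℕ) :
    besselSeries x k = ∑' i, (besselTerm x k (2 * i) - besselTerm x k (2 * i + 1)) := by
  have heven : Summable fun i ↦ besselTerm x k (2 * i) :=
    (summable_besselTerm hx k).comp_injective fun _ _ h ↦ by omega
  have hodd : Summable fun i ↦ besselTerm x k (2 * i + 1) :=
    (summable_besselTerm hx k).comp_injective fun _ _ h ↦ by omega
  have heven' : (fun i ↦ (-1 : ℝ) ^ (2 * i) * besselTerm x k (2 * i)) =
      fun i ↦ besselTerm x k (2 * i) := by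
    ext; simp [pow_mul]
  have hodd' : (fun i ↦ (-1 : ℝ) ^ (2 * i + 1) * besselTerm x k (2 * i + 1)) =
      fun i ↦ -besselTerm x k (2 * i + 1) := by
    ext; simp [pow_succ, pow_mul]
  rw [besselSeries, ← tsum_even_add_odd (f := fun j ↦ (-1 : ℝ) ^ j * besselTerm x k j)
    (by rw [heven']; exact heven) (by rw [hodd']; exact hodd.neg), heven', hodd', tsum_neg,
    heven.tsum_sub hodd, sub_eq_add_neg]

lemma besselSeries_pos (hx₀ : 0 < x) (hx₁ : x < 1) (k : ℕ) : 0 < besselSeries x k := by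
  rw [besselSeries_eq_tsum_pairs hx₀.le]
  exact (summable_besselTerm_pairs hx₀.le k).tsum_pos
    (fun i ↦ (besselTerm_sub_succ_pos hx₀ hx₁ k (2 * i)).le) 0
    (besselTerm_sub_succ_pos hx₀ hx₁ k 0)

lemma add_half_mul_besselSeries_succ_le (hx₀ : 0 ≤ x) (hx : x ≤ 2 / 3) (k : ℕ) :
    (k + 1 / 2) * besselSeries x (k + 1) ≤ besselSeries x k := by
  rw [besselSeries_eq_tsum_pairs hx₀, besselSeries_eq_tsum_pairs hx₀, ← tsum_mul_left]
  exact ((summable_besselTerm_pairs hx₀ (k + 1)).mul_left _).tsum_le_tsum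
    (fun i ↦ add_half_mul_besselTerm_sub_succ_le hx₀ hx k (2 * i))
    (summable_besselTerm_pairs hx₀ k)

lemma antitone_gamma_mul_besselSeries (hx₀ : 0 ≤ x) (hx : x ≤ 2 / 3) :
    Antitone fun k : ℕ ↦ Real.Gamma (k + 1 / 2) * besselSeries x k := by
  refine antitone_nat_of_succ_le fun k ↦ ?_
  have hΓ : Real.Gamma ((k + 1 : ℕ) + 1 / 2) = (k + 1 / 2) * Real.Gamma (k + 1 / 2) := by
    rw [show ((k + 1 : ℕ) : ℝ) + 1 / 2 = k + 1 / 2 + 1 by push_cast; ring,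
      Real.Gamma_add_one (by positivity)]
  rw [hΓ, mul_comm _ (Real.Gamma _), mul_assoc]
  exact mul_le_mul_of_nonneg_left (add_half_mul_besselSeries_succ_le hx₀ hx k)
    (Real.Gamma_pos_of_pos (by positivity)).le

lemma besselJ_eq_pow_mul_besselSeries (k : ℕ) (t : ℝ) :
    besselJ k t = (t / 2) ^ k * besselSeries ((t / 2) ^ 2) k := by
  rw [besselJ, besselSeries, ← tsum_mul_left]
  congr 1 with j
  rw [besselTerm, pow_add, pow_mul]
  ring

lemma besselJ_div_besselJ {m n : ℕ} (hmn : m ≤ n) {t : ℝ} (ht : t ≠ 0) :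
    besselJ n t / besselJ m t =
      (t / 2) ^ (n - m) * (besselSeries ((t / 2) ^ 2) n / besselSeries ((t / 2) ^ 2) m) := by
  rw [besselJ_eq_pow_mul_besselSeries, besselJ_eq_pow_mul_besselSeries,
    ← pow_sub_mul_pow _ hmn]
  have : (t / 2) ^ m ≠ 0 := by positivity
  field_simp

end BesselJ

open BesselJ in
/-- For integers `n > m ≥ 0` and `0 < t ≤ π/2`,
`J_n(t)/J_m(t) ≤ (t/2)^{n−m} Γ(m+1/2)/Γ(n+1/2)`. -/
theorem besselJ_ratio_gamma_bound (n m : ℕ) (hmn : m < n) (t : ℝ)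
    (ht0 : 0 < t) (ht : t ≤ Real.pi / 2) :
    besselJ n t / besselJ m t ≤
      (t / 2) ^ (n - m) * (Real.Gamma (m + 1 / 2) / Real.Gamma (n + 1 / 2)) := by
  have hx₀ : 0 < (t / 2) ^ 2 := by positivity
  have hx : (t / 2) ^ 2 ≤ 2 / 3 :=
    calc (t / 2) ^ 2 ≤ 0.79 ^ 2 := by gcongr; linarith [Real.pi_lt_d2]
      _ ≤ 2 / 3 := by norm_num
  have hSm := besselSeries_pos hx₀ (by linarith) m
  have hΓn : 0 < Real.Gamma (n + 1 / 2) := Real.Gamma_pos_of_pos (by positivity)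
  have hanti := antitone_gamma_mul_besselSeries hx₀.le hx hmn.le
  rw [besselJ_div_besselJ hmn.le ht0.ne']
  refine mul_le_mul_of_nonneg_left ?_ (by positivity)
  rw [div_le_div_iff₀ hSm hΓn]
  linarith
end

section
/- For every integer n ≥ 1, (n/e)^n e^{1/(12n+1)} √(2πn) < n! < (n/e)^n e^{1/(12n)} √(2πn). -/
/-!
Robbins' argument. For `s n = n! / (√(2n) (n/e)^n)` (`Stirling.stirlingSeq`) and
`r = (2n+1)⁻²`, `log s n - log s (n+1) = ∑_{k ≥ 1} r^k / (2k+1)`. Bounding `1/(2k+1)` above by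
`1/3` and below by `3^(k-1) / (3·5^(k-1))` compares this with two geometric series, whose sums
show that `log s n - 1/(12n)` is strictly increasing and `log s n - 1/(12n+1)` strictly
decreasing. Both tend to `log √π` by Stirling's formula, which bounds `s n` strictly on each side.
-/

open Real Filter Stirling
open scoped Nat Topology

theorem three_pow_mul_le_three_mul_five_pow (k : ℕ) : 3 ^ k * (2 * k + 3) ≤ 3 * 5 ^ k := by
  induction k with
  | zero => norm_num
  | succ k ih =>
    have : 3 ^ k ≤ 5 ^ k := Nat.pow_le_pow_left (by norm_num) k
    rw [pow_succ, pow_succ]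
    nlinarith

section LimitComparison

variable {α : Type*} [AddCommGroup α] [PartialOrder α] [IsOrderedAddMonoid α]
  [TopologicalSpace α] [OrderClosedTopology α] [IsTopologicalAddGroup α] {f g : ℕ → α} {L : α}

theorem lt_add_of_tendsto_of_sub_succ_lt (hf : Tendsto f atTop (𝓝 L))
    (hg : Tendsto g atTop (𝓝 0)) (h : ∀ k, f k - f (k + 1) < g k - g (k + 1)) (k : ℕ) :
    f k < L + g k := by
  have hmono : StrictMono (f - g) := strictMono_nat_of_lt_succ fun k => by
    simpa only [Pi.sub_apply, sub_lt_sub_iff, add_comm] using h k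
  have hlim : Tendsto (f - g) atTop (𝓝 L) := by rw [← sub_zero L]; exact hf.sub hg
  have := (hmono k.lt_succ_self).trans_le (hmono.monotone.ge_of_tendsto hlim (k + 1))
  rwa [Pi.sub_apply, sub_lt_iff_lt_add] at this

theorem add_lt_of_tendsto_of_lt_sub_succ (hf : Tendsto f atTop (𝓝 L))
    (hg : Tendsto g atTop (𝓝 0)) (h : ∀ k, g k - g (k + 1) < f k - f (k + 1)) (k : ℕ) :
    L + g k < f k := by
  have := lt_add_of_tendsto_of_sub_succ_lt (f := -f) (g := -g) hf.neg
    (by rw [← neg_zero]; exact hg.neg)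
    (fun k => by simpa only [Pi.neg_apply, neg_sub_neg, sub_lt_sub_iff, add_comm] using h k) k
  rwa [Pi.neg_apply, Pi.neg_apply, ← neg_add, neg_lt_neg_iff] at this

end LimitComparison

theorem tendsto_one_div_mul_natCast_succ_add {a : ℝ} (ha : 0 < a) (c : ℝ) :
    Tendsto (fun k : ℕ => 1 / (a * ((k + 1 : ℕ) : ℝ) + c)) atTop (𝓝 0) := by
  have h : Tendsto (fun k : ℕ => a * ((k + 1 : ℕ) : ℝ) + c) atTop atTop :=
    tendsto_atTop_add_const_right _ c <|
      (tendsto_natCast_atTop_atTop.comp (tendsto_add_atTop_nat 1)).const_mul_atTop ha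
  simp only [one_div]
  exact h.inv_tendsto_atTop

namespace Stirling

theorem hasSum_log_stirlingSeq_sub_succ {n : ℕ} (hn : n ≠ 0) :
    HasSum (fun k : ℕ => ((1 / (2 * n + 1) : ℝ) ^ 2) ^ (k + 1) / (2 * k + 3))
      (log (stirlingSeq n) - log (stirlingSeq (n + 1))) := by
  obtain ⟨m, rfl⟩ := Nat.exists_eq_succ_of_ne_zero hn
  refine (log_stirlingSeq_sdiff_hasSum m).congr_fun fun k => ?_
  push_cast
  ring

theorem log_stirlingSeq_sub_succ_lt {n : ℕ} (hn : n ≠ 0) :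
    log (stirlingSeq n) - log (stirlingSeq (n + 1)) < 1 / (12 * n) - 1 / (12 * (n + 1)) := by
  have hn1 : (1 : ℝ) ≤ n := Nat.one_le_cast.mpr (Nat.pos_of_ne_zero hn)
  have hn0 : (n : ℝ) ≠ 0 := by positivity
  have hS := hasSum_log_stirlingSeq_sub_succ hn
  set r : ℝ := (1 / (2 * n + 1)) ^ 2 with hr
  have hr0 : 0 < r := by positivity
  have hr1 : r < 1 := by rw [hr, div_pow, one_pow, div_lt_one (by positivity)]; nlinarith
  have hgeom : HasSum (fun k : ℕ => r ^ (k + 1) / 3) (r / (1 - r) / 3) := by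
    simpa only [← pow_succ', ← div_eq_mul_inv] using
      ((hasSum_geometric_of_lt_one hr0.le hr1).mul_left r).div_const 3
  have hsum : r / (1 - r) / 3 = 1 / (12 * n) - 1 / (12 * (n + 1)) := by
    have : (2 * (n : ℝ) + 1) ^ 2 - 1 = 4 * n * (n + 1) := by ring
    rw [hr]
    field_simp
    rw [this]
    field_simp
    ring
  rw [← hsum]
  refine hasSum_lt (i := 1) (fun k => ?_) ?_ hS hgeom
  · dsimp only
    gcongr
    linarith [(k.cast_nonneg : (0 : ℝ) ≤ k)]
  · norm_num
    gcongr
    norm_num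

theorem sub_lt_log_stirlingSeq_sub_succ {n : ℕ} (hn : n ≠ 0) :
    1 / (12 * n + 1) - 1 / (12 * (n + 1) + 1) <
      log (stirlingSeq n) - log (stirlingSeq (n + 1)) := by
  have hn1 : (1 : ℝ) ≤ n := Nat.one_le_cast.mpr (Nat.pos_of_ne_zero hn)
  have hS := hasSum_log_stirlingSeq_sub_succ hn
  set r : ℝ := (1 / (2 * n + 1)) ^ 2 with hr
  have hr0 : 0 < r := by positivity
  have hr9 : r ≤ 1 / 9 := by
    rw [hr, div_pow, one_pow, div_le_div_iff₀ (by positivity) (by norm_num)]; nlinarith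
  have hgeom : HasSum (fun k : ℕ => r / 3 * (3 * r / 5) ^ k) (r / 3 / (1 - 3 * r / 5)) :=
    (hasSum_geometric_of_lt_one (by positivity) (by linarith)).mul_left (r / 3)
  have hterm (k : ℕ) : r / 3 * (3 * r / 5) ^ k ≤ r ^ (k + 1) / (2 * k + 3) := by
    have hk : (3 : ℝ) ^ k * (2 * k + 3) ≤ 3 * 5 ^ k := by
      exact_mod_cast three_pow_mul_le_three_mul_five_pow k
    calc r / 3 * (3 * r / 5) ^ k = r ^ (k + 1) * (3 ^ k / (3 * 5 ^ k)) := by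
          rw [div_pow, mul_pow]
          ring
      _ ≤ r ^ (k + 1) * (1 / (2 * k + 3)) := by
        refine mul_le_mul_of_nonneg_left ?_ (by positivity)
        rw [div_le_div_iff₀ (by positivity) (by positivity)]
        linarith
      _ = r ^ (k + 1) / (2 * k + 3) := by ring
  calc 1 / (12 * n + 1) - 1 / (12 * (n + 1) + 1)
        = 12 / ((12 * (n : ℝ) + 1) * (12 * n + 13)) := by
        field_simp
        ring
    _ < 5 / (60 * (n : ℝ) ^ 2 + 60 * n + 6) := by
        -- equivalent to `7 < 120 n`
        rw [div_lt_div_iff₀ (by positivity) (by positivity)]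
        nlinarith
    _ = r / 3 / (1 - 3 * r / 5) := by
        rw [hr]
        field_simp
        rw [eq_div_iff (by nlinarith)]
        ring
    _ ≤ _ := hasSum_le hterm hgeom hS

theorem tendsto_log_stirlingSeq_succ :
    Tendsto (fun k : ℕ => log (stirlingSeq (k + 1))) atTop (𝓝 (log √π)) :=
  (tendsto_stirlingSeq_sqrt_pi.comp (tendsto_add_atTop_nat 1)).log (by positivity)

theorem stirlingSeq_lt_sqrt_pi_mul_exp {n : ℕ} (hn : n ≠ 0) :
    stirlingSeq n < √π * exp (1 / (12 * n)) := by
  obtain ⟨m, rfl⟩ := Nat.exists_eq_succ_of_ne_zero hn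
  have := lt_add_of_tendsto_of_sub_succ_lt tendsto_log_stirlingSeq_succ
    (by simpa using tendsto_one_div_mul_natCast_succ_add (a := 12) (by norm_num) 0)
    (fun k => by simpa using log_stirlingSeq_sub_succ_lt k.succ_ne_zero) m
  rw [← log_lt_log_iff (stirlingSeq'_pos m) (by positivity),
    log_mul (by positivity) (exp_pos _).ne', log_exp]
  simpa using this

theorem sqrt_pi_mul_exp_lt_stirlingSeq {n : ℕ} (hn : n ≠ 0) :
    √π * exp (1 / (12 * n + 1)) < stirlingSeq n := by
  obtain ⟨m, rfl⟩ := Nat.exists_eq_succ_of_ne_zero hn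
  have := add_lt_of_tendsto_of_lt_sub_succ tendsto_log_stirlingSeq_succ
    (tendsto_one_div_mul_natCast_succ_add (a := 12) (by norm_num) 1)
    (fun k => by simpa using sub_lt_log_stirlingSeq_sub_succ k.succ_ne_zero) m
  rw [← log_lt_log_iff (by positivity) (stirlingSeq'_pos m),
    log_mul (by positivity) (exp_pos _).ne', log_exp]
  simpa using this

theorem factorial_eq_stirlingSeq_mul {n : ℕ} (hn : n ≠ 0) :
    (n ! : ℝ) = stirlingSeq n * (√(2 * n) * (n / exp 1) ^ n) := by
  rw [stirlingSeq, div_mul_cancel₀ _ (by positivity)]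

end Stirling

/-- Stirling's two-sided inequality:
`(n/e)^n e^{1/(12n+1)} √(2πn) < n! < (n/e)^n e^{1/(12n)} √(2πn)` for `n ≥ 1`. -/
theorem stirling_two_sided (n : ℕ) (hn : 1 ≤ n) :
    ((n : ℝ) / Real.exp 1) ^ n * Real.exp (1 / (12 * n + 1)) *
        Real.sqrt (2 * Real.pi * n) < (n.factorial : ℝ) ∧
      (n.factorial : ℝ) <
        ((n : ℝ) / Real.exp 1) ^ n * Real.exp (1 / (12 * n)) *
          Real.sqrt (2 * Real.pi * n) := by
  have hn0 : n ≠ 0 := Nat.one_le_iff_ne_zero.mp hn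
  have hscale : 0 < √(2 * n) * (n / exp 1) ^ n := by positivity
  have hsqrt : √(2 * π * n) = √π * √(2 * n) := by rw [← sqrt_mul pi_pos.le]; congr 1; ring
  rw [factorial_eq_stirlingSeq_mul hn0, hsqrt]
  constructor
  · calc _ = √π * exp (1 / (12 * n + 1)) * (√(2 * n) * (n / exp 1) ^ n) := by ring
      _ < _ := mul_lt_mul_of_pos_right (sqrt_pi_mul_exp_lt_stirlingSeq hn0) hscale
  · calc _ < √π * exp (1 / (12 * n)) * (√(2 * n) * (n / exp 1) ^ n) :=
          mul_lt_mul_of_pos_right (stirlingSeq_lt_sqrt_pi_mul_exp hn0) hscale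
      _ = _ := by ring
end

section
/- For any δ > 0, r > δ, k > 0 and integer n ≥ 0, (∫_0^r J_n(ks)² s ds) / (∫_0^δ J_n(ks)² s ds) ≥ 1, and for fixed k, r, δ this ratio is bounded below by c (r/δ)^{2n} for some constant c > 0 independent of n once n is large enough that kr/(2n+1) ≤ 1/√2. -/
open scoped Nat

open MeasureTheory Set

noncomputable def besselTerm (n : ℕ) (t : ℝ) (m : ℕ) : ℝ :=
  ((-1 : ℝ) ^ m * (t / 2) ^ (2 * m + n)) / ((m ! : ℝ) * ((m + n)! : ℝ))

noncomputable def besselLeading (n : ℕ) (t : ℝ) : ℝ := (t / 2) ^ n / n !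

lemma abs_besselLeading (n : ℕ) (t : ℝ) : |besselLeading n t| = |t / 2| ^ n / n ! := by
  rw [besselLeading, abs_div, abs_pow, Nat.abs_cast]

lemma besselLeading_pos (n : ℕ) {t : ℝ} (ht : 0 < t) : 0 < besselLeading n t := by
  unfold besselLeading; positivity

@[fun_prop]
lemma continuous_besselLeading (n : ℕ) : Continuous (besselLeading n) := by
  unfold besselLeading; fun_prop

lemma besselTerm_zero (n : ℕ) (t : ℝ) : besselTerm n t 0 = besselLeading n t := by
  simp [besselTerm, besselLeading]

lemma abs_besselTerm_le (n : ℕ) (t : ℝ) (m : ℕ) :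
    |besselTerm n t m| ≤ |besselLeading n t| * ((t ^ 2 / (4 * (n + 1))) ^ m / m !) := by
  have hfac : (n ! : ℝ) * (n + 1) ^ m ≤ (m + n)! := by
    rw [add_comm m]; exact_mod_cast Nat.factorial_mul_pow_le_factorial
  have habs : |besselTerm n t m| = |t / 2| ^ n * (t ^ 2 / 4) ^ m / (m ! * (m + n)!) := by
    rw [besselTerm, abs_div, abs_mul, abs_pow, abs_pow, abs_neg, abs_one, one_pow, one_mul,
      abs_of_pos (by positivity : (0 : ℝ) < m ! * (m + n)!), pow_add, pow_mul, sq_abs]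
    ring
  calc |besselTerm n t m| = |t / 2| ^ n * (t ^ 2 / 4) ^ m / (m ! * (m + n)!) := habs
    _ ≤ |t / 2| ^ n * (t ^ 2 / 4) ^ m / (m ! * (n ! * (n + 1) ^ m)) := by gcongr
    _ = _ := by rw [abs_besselLeading, div_pow, div_pow, mul_pow]; field_simp

lemma summable_besselTerm (n : ℕ) (t : ℝ) : Summable (besselTerm n t) :=
  .of_norm_bounded ((Real.summable_pow_div_factorial _).mul_left _) (abs_besselTerm_le n t)

lemma hasSum_pow_div_factorial_exp (x : ℝ) : HasSum (fun m : ℕ => x ^ m / m !) (Real.exp x) :=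
  Real.exp_eq_exp_ℝ ▸ NormedSpace.expSeries_div_hasSum_exp x

lemma abs_besselJ_sub_besselLeading_le (n : ℕ) (t : ℝ) :
    |besselJ n t - besselLeading n t| ≤
      |besselLeading n t| * (Real.exp (t ^ 2 / (4 * (n + 1))) - 1) := by
  set x := t ^ 2 / (4 * (n + 1))
  have htail : besselJ n t - besselLeading n t = ∑' m, besselTerm n t (m + 1) := by
    rw [show besselJ n t = ∑' m, besselTerm n t m from rfl,
      (summable_besselTerm n t).tsum_eq_zero_add, besselTerm_zero, add_sub_cancel_left]
  have hexp : HasSum (fun m => |besselLeading n t| * (x ^ (m + 1) / (m + 1)!))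
      (|besselLeading n t| * (Real.exp x - 1)) := by
    simpa using ((hasSum_nat_add_iff' 1).2 (hasSum_pow_div_factorial_exp x)).mul_left
      |besselLeading n t|
  rw [htail]
  exact tsum_of_norm_bounded (f := fun m => besselTerm n t (m + 1)) hexp
    fun m => abs_besselTerm_le n t (m + 1)

lemma abs_besselJ_sub_besselLeading_le_half {n : ℕ} {t : ℝ} (ht : t ^ 2 ≤ n + 1) :
    |besselJ n t - besselLeading n t| ≤ |besselLeading n t| / 2 := by
  set x := t ^ 2 / (4 * (n + 1))
  have hx₀ : 0 ≤ x := by positivity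
  have hx : x ≤ 1 / 4 := by
    rw [div_le_iff₀ (by positivity)]; linarith
  have hexp : Real.exp x - 1 ≤ 1 / 2 := by
    have := (abs_le.1 (Real.abs_exp_sub_one_le (x := x) (by rw [abs_of_nonneg hx₀]; linarith))).2
    rw [abs_of_nonneg hx₀] at this
    linarith
  calc _ ≤ _ := abs_besselJ_sub_besselLeading_le n t
    _ ≤ |besselLeading n t| * (1 / 2) := by gcongr
    _ = _ := by ring

lemma besselJ_sq_mem_Icc {n : ℕ} {t : ℝ} (ht₀ : 0 ≤ t) (ht : t ^ 2 ≤ n + 1) :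
    besselJ n t ^ 2 ∈ Icc (besselLeading n t ^ 2 / 4) (9 / 4 * besselLeading n t ^ 2) := by
  have ha : 0 ≤ besselLeading n t := by unfold besselLeading; positivity
  have h := abs_le.1 (abs_besselJ_sub_besselLeading_le_half ht)
  rw [abs_of_nonneg ha] at h
  constructor <;> nlinarith [h.1, h.2]

@[fun_prop]
lemma continuous_besselJ (n : ℕ) : Continuous (besselJ n) := by
  refine continuous_iff_continuousAt.2 fun t₀ => ?_
  set R := |t₀| + 1
  have hon : ContinuousOn (besselJ n) (Icc (-R) R) := by
    refine continuousOn_tsum (fun m => by fun_prop)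
      ((Real.summable_pow_div_factorial (R ^ 2 / (4 * (n + 1)))).mul_left ((R / 2) ^ n / n !))
      fun m t ht => (abs_besselTerm_le n t m).trans ?_
    have htR : |t| ≤ R := abs_le.2 ht
    rw [abs_besselLeading, abs_div, abs_two]
    gcongr (?_ / 2) ^ n / _ * ((?_ / _) ^ m / _)
    rw [← sq_abs]; gcongr
  exact hon.continuousAt
    (Icc_mem_nhds (by linarith [neg_abs_le t₀]) (by linarith [le_abs_self t₀]))

lemma intervalIntegrable_besselJ_sq_mul (n : ℕ) (k a b : ℝ) :
    IntervalIntegrable (fun s => besselJ n (k * s) ^ 2 * s) volume a b :=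
  (by fun_prop : Continuous fun s => besselJ n (k * s) ^ 2 * s).intervalIntegrable a b

lemma integral_besselLeading_sq_mul (n : ℕ) (k ρ : ℝ) :
    ∫ s in (0 : ℝ)..ρ, besselLeading n (k * s) ^ 2 * s =
      besselLeading n k ^ 2 * (ρ ^ (2 * n + 2) / (2 * n + 2)) := by
  have h : ∀ s : ℝ, besselLeading n (k * s) ^ 2 * s = besselLeading n k ^ 2 * s ^ (2 * n + 1) :=
    fun s => by unfold besselLeading; ring
  simp_rw [h, intervalIntegral.integral_const_mul, integral_pow]
  push_cast
  ring_nf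

noncomputable def besselRadialIntegral (n : ℕ) (k ρ : ℝ) : ℝ :=
  ∫ s in (0 : ℝ)..ρ, besselJ n (k * s) ^ 2 * s

section RadialIntegral

variable (n : ℕ) {k : ℝ}

lemma besselRadialIntegral_mono {a b : ℝ} (ha : 0 ≤ a) (hab : a ≤ b) :
    besselRadialIntegral n k a ≤ besselRadialIntegral n k b :=
  intervalIntegral.integral_mono_interval le_rfl ha hab
    (ae_restrict_of_forall_mem measurableSet_Ioc fun s hs => by
      have := hs.1.le
      positivity)
    (intervalIntegrable_besselJ_sq_mul n k 0 b)

lemma besselRadialIntegral_mem_Icc (hk : 0 ≤ k) {ρ : ℝ} (hρ : 0 ≤ ρ)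
    (h : (k * ρ) ^ 2 ≤ n + 1) :
    besselRadialIntegral n k ρ ∈
      Icc (besselLeading n k ^ 2 * (ρ ^ (2 * n + 2) / (2 * n + 2)) / 4)
        (9 / 4 * (besselLeading n k ^ 2 * (ρ ^ (2 * n + 2) / (2 * n + 2)))) := by
  have hpt : ∀ s ∈ Icc 0 ρ, besselJ n (k * s) ^ 2 ∈
      Icc (besselLeading n (k * s) ^ 2 / 4) (9 / 4 * besselLeading n (k * s) ^ 2) :=
    fun s hs => besselJ_sq_mem_Icc (mul_nonneg hk hs.1)
      ((pow_le_pow_left₀ (mul_nonneg hk hs.1) (by gcongr; exact hs.2) 2).trans h)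
  have hint : IntervalIntegrable (fun s => besselLeading n (k * s) ^ 2 * s) volume 0 ρ :=
    (by fun_prop : Continuous fun s => besselLeading n (k * s) ^ 2 * s).intervalIntegrable 0 ρ
  rw [← integral_besselLeading_sq_mul, ← intervalIntegral.integral_div,
    ← intervalIntegral.integral_const_mul]
  constructor
  · refine intervalIntegral.integral_mono_on hρ (hint.div_const _)
      (intervalIntegrable_besselJ_sq_mul n k 0 ρ) fun s hs => ?_
    have := mul_le_mul_of_nonneg_right (hpt s hs).1 hs.1
    linarith
  · refine intervalIntegral.integral_mono_on hρ (intervalIntegrable_besselJ_sq_mul n k 0 ρ)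
      (hint.const_mul _) fun s hs => ?_
    have := mul_le_mul_of_nonneg_right (hpt s hs).2 hs.1
    linarith

lemma besselRadialIntegral_pos (hk : 0 < k) {ρ : ℝ} (hρ : 0 < ρ) :
    0 < besselRadialIntegral n k ρ := by
  set ε := min ρ k⁻¹
  have hε : 0 < ε := lt_min hρ (inv_pos.2 hk)
  have hkε : (k * ε) ^ 2 ≤ n + 1 := by
    have : k * ε ≤ 1 := by
      calc k * ε ≤ k * k⁻¹ := by gcongr; exact min_le_right _ _
        _ = 1 := mul_inv_cancel₀ hk.ne'
    nlinarith [mul_pos hk hε, (n.cast_nonneg : (0 : ℝ) ≤ n)]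
  have hL := besselLeading_pos n hk
  calc 0 < besselLeading n k ^ 2 * (ε ^ (2 * n + 2) / (2 * n + 2)) / 4 := by positivity
    _ ≤ besselRadialIntegral n k ε := (besselRadialIntegral_mem_Icc n hk.le hε.le hkε).1
    _ ≤ besselRadialIntegral n k ρ := besselRadialIntegral_mono n hε.le (min_le_left _ _)

lemma one_le_besselRadialIntegral_div (hk : 0 < k) {δ r : ℝ} (hδ : 0 < δ) (hδr : δ ≤ r) :
    1 ≤ besselRadialIntegral n k r / besselRadialIntegral n k δ :=
  (one_le_div (besselRadialIntegral_pos n hk hδ)).2 (besselRadialIntegral_mono n hδ.le hδr)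

lemma div_pow_div_le_besselRadialIntegral_div (hk : 0 < k) {δ r : ℝ} (hδ : 0 < δ)
    (hδr : δ ≤ r) (h : (k * r) ^ 2 ≤ n + 1) :
    (r / δ) ^ (2 * n) / 9 ≤ besselRadialIntegral n k r / besselRadialIntegral n k δ := by
  have hkδ : (k * δ) ^ 2 ≤ n + 1 := (pow_le_pow_left₀ (by positivity) (by gcongr) 2).trans h
  have hr := besselRadialIntegral_mem_Icc n hk.le (hδ.le.trans hδr) h
  have hδ' := besselRadialIntegral_mem_Icc n hk.le hδ.le hkδ
  have hL := besselLeading_pos n hk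
  calc (r / δ) ^ (2 * n) / 9 ≤ (r / δ) ^ (2 * n + 2) / 9 := by
        gcongr
        · exact (one_le_div hδ).2 hδr
        · omega
    _ = besselLeading n k ^ 2 * (r ^ (2 * n + 2) / (2 * n + 2)) / 4 /
          (9 / 4 * (besselLeading n k ^ 2 * (δ ^ (2 * n + 2) / (2 * n + 2)))) := by
      rw [div_pow]; field_simp
    _ ≤ besselRadialIntegral n k r / besselRadialIntegral n k δ :=
      div_le_div₀ (besselRadialIntegral_pos n hk (hδ.trans_le hδr)).le hr.1
        (besselRadialIntegral_pos n hk hδ) hδ'.2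

end RadialIntegral

/-- For `r > δ > 0` and `k > 0`, the ratio of radial Bessel integrals
`(∫_0^r J_n(ks)² s ds)/(∫_0^δ J_n(ks)² s ds)` is at least `1` for every `n ≥ 0`,
and is bounded below by `c (r/δ)^{2n}` with a constant `c > 0` independent of `n`
once `kr/(2n+1) ≤ 1/√2`. -/
theorem bessel_radial_ratio_lower_bound (δ r k : ℝ)
    (hδ : 0 < δ) (hr : δ < r) (hk : 0 < k) :
    (∀ n : ℕ,
      1 ≤ (∫ s in (0 : ℝ)..r, (besselJ n (k * s)) ^ 2 * s) /
            (∫ s in (0 : ℝ)..δ, (besselJ n (k * s)) ^ 2 * s)) ∧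
    ∃ c : ℝ, 0 < c ∧ ∀ n : ℕ, k * r / (2 * n + 1) ≤ 1 / Real.sqrt 2 →
      c * (r / δ) ^ (2 * n) ≤
        (∫ s in (0 : ℝ)..r, (besselJ n (k * s)) ^ 2 * s) /
          (∫ s in (0 : ℝ)..δ, (besselJ n (k * s)) ^ 2 * s) := by
  have hr₀ : 0 < r := hδ.trans hr
  refine ⟨fun n => one_le_besselRadialIntegral_div n hk hδ hr.le, ?_⟩
  obtain ⟨N, hN⟩ := exists_nat_ge ((k * r) ^ 2)
  refine ⟨min (1 / 9) ((δ / r) ^ (2 * N)), by positivity, fun n _ => ?_⟩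
  rcases le_or_gt N n with hNn | hnN
  · have h : (k * r) ^ 2 ≤ n + 1 := by
      have : (N : ℝ) ≤ n := by exact_mod_cast hNn
      linarith
    calc min (1 / 9) ((δ / r) ^ (2 * N)) * (r / δ) ^ (2 * n)
          ≤ 1 / 9 * (r / δ) ^ (2 * n) :=
          mul_le_mul_of_nonneg_right (min_le_left _ _) (by positivity)
      _ = (r / δ) ^ (2 * n) / 9 := by ring
      _ ≤ _ := div_pow_div_le_besselRadialIntegral_div n hk hδ hr.le h
  · calc min (1 / 9) ((δ / r) ^ (2 * N)) * (r / δ) ^ (2 * n)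
          ≤ (δ / r) ^ (2 * N) * (r / δ) ^ (2 * N) := by
          gcongr
          · exact min_le_right _ _
          · exact (one_le_div hδ).2 hr.le
      _ = 1 := by rw [← mul_pow, div_mul_div_comm, mul_comm δ, div_self (by positivity), one_pow]
      _ ≤ _ := one_le_besselRadialIntegral_div n hk hδ hr.le
end
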